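/- The slice monogenic Szegő kernel reproduces the sequential Hardy space of the unit ball: for every f∈𝐇²(B₈(0,1),𝕆) and every x∈B₈(0,1), the function 𝒮(·,x) belongs to 𝐇²(B₈(0,1),𝕆) and [f, 𝒮(·,x)] = f(x); explicitly, if f(y)=Σ_{n≥0}yⁿaₙ then Σ_{n≥0} conj(x̄ⁿ)·aₙ = Σ_{n≥0} xⁿaₙ = f(x), where 𝒮(y,x) = Σ_{n≥0} yⁿx̄ⁿ = (1−2Re(x)y+|x|²y²)^{−1}(1−yx). -/

import Mathlib

noncomputable section

open MeasureTheory

/-- The octonions `𝕆`, modelled as ℝ⁸ with the Euclidean norm. -/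
abbrev Oct : Type := EuclideanSpace ℝ (Fin 8)

namespace Oct

/-- Index table of the octonionic multiplication: `e i * e j = ± e (idxT i j)`. -/
def idxT : Fin 8 → Fin 8 → Fin 8 :=
  ![![0,1,2,3,4,5,6,7],
    ![1,0,4,5,2,3,7,6],
    ![2,4,0,6,1,7,3,5],
    ![3,5,6,0,7,1,2,4],
    ![4,2,1,7,0,6,5,3],
    ![5,3,7,1,6,0,4,2],
    ![6,7,3,2,5,4,0,1],
    ![7,6,5,4,3,2,1,0]]

/-- Sign table of the octonionic multiplication: `e i * e j = signT i j • e (idxT i j)`. -/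
def signT : Fin 8 → Fin 8 → ℝ :=
  ![![1,1,1,1,1,1,1,1],
    ![1,-1,1,1,-1,-1,-1,1],
    ![1,-1,-1,1,1,1,-1,-1],
    ![1,-1,-1,-1,-1,1,1,1],
    ![1,1,-1,1,-1,-1,1,-1],
    ![1,1,-1,-1,1,-1,-1,1],
    ![1,1,1,-1,-1,1,-1,-1],
    ![1,-1,1,-1,1,-1,1,-1]]

/-- Octonionic multiplication. -/
def omul (x y : Oct) : Oct :=
  (WithLp.equiv 2 (Fin 8 → ℝ)).symm fun k =>
    ∑ i : Fin 8, ∑ j : Fin 8,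
      if idxT i j = k then signT i j * x i * y j else 0

/-- Octonionic conjugation `x̄`. -/
def oconj (x : Oct) : Oct :=
  (WithLp.equiv 2 (Fin 8 → ℝ)).symm fun k => if k = 0 then x k else -x k

/-- Real part of an octonion. -/
def oRe (x : Oct) : ℝ := x 0

/-- The basis octonions `e i`. -/
def unit (i : Fin 8) : Oct := EuclideanSpace.single i 1

/-- The octonion `1`. -/
def oone : Oct := unit 0

/-- Powers of an octonion (powers are unambiguous by power-associativity). -/
def opow (x : Oct) : ℕ → Oct
  | 0 => oone
  | n + 1 => omul (opow x n) x

/-- Inverse of a nonzero octonion. -/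
def oinv (x : Oct) : Oct := (‖x‖ ^ 2)⁻¹ • oconj x

/-- A function is left octonionic monogenic on `U` if `𝒟 f = 0` there, where
`𝒟 = ∂/∂x₀ + Σᵢ eᵢ ∂/∂xᵢ` is the octonionic Cauchy–Riemann operator. -/
def LeftMonogenicOn (f : Oct → Oct) (U : Set Oct) : Prop :=
  ∀ x ∈ U, DifferentiableAt ℝ f x ∧
    ∑ i : Fin 8, omul (unit i) (fderiv ℝ f x (unit i)) = 0

/-- The sphere `𝕊` of imaginary units of `𝕆`. -/
def sphS : Set Oct := {x | oRe x = 0 ∧ ‖x‖ = 1}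

/-- The complex slice `ℂ_I = ℝ + ℝ I`. -/
def sliceC (I : Oct) : Set Oct := {x | ∃ u v : ℝ, x = u • oone + v • I}

/-- A function is (left) slice monogenic on `Ω` if its restriction to every slice `ℂ_I`
is holomorphic, i.e. `(∂/∂u + I ∂/∂v) f(u + Iv) = 0`. -/
def SliceMonogenicOn (f : Oct → Oct) (Ω : Set Oct) : Prop :=
  ∀ I ∈ sphS, ∀ u v : ℝ, u • oone + v • I ∈ Ω →
    DifferentiableAt ℝ (fun p : ℝ × ℝ => f (p.1 • oone + p.2 • I)) (u, v) ∧
    fderiv ℝ (fun p : ℝ × ℝ => f (p.1 • oone + p.2 • I)) (u, v) (1, 0)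
      + omul I (fderiv ℝ (fun p : ℝ × ℝ => f (p.1 • oone + p.2 • I)) (u, v) (0, 1)) = 0

end Oct

namespace Oct

/-- The octonionic slice monogenic Szegő kernel
`𝒮(y,x) = (1 - 2Re(x)y + |x|²y²)⁻¹ (1 - yx) = Σₙ yⁿ x̄ⁿ`. -/
def sliceSzego (y x : Oct) : Oct :=
  omul (oinv (oone - (2 * oRe x) • y + (‖x‖ ^ 2) • omul y y)) (oone - omul y x)

/-- The sequential octonion-valued inner product `[f,g] = Σₙ conj(bₙ)aₙ` of the Hardy
space of the unit ball, on Taylor coefficient sequences (`a` for `f`, `b` for `g`). -/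
def seqInner (a b : ℕ → Oct) : Oct := ∑' n : ℕ, omul (oconj (b n)) (a n)

end Oct

/-!
Two identities in `𝕆`, checked on coordinates, carry the proof: `t² = 2Re(t)t - |t|²` and left
alternativity `t²z = t(tz)`. The first gives the recurrence
`tⁿ⁺² = 2Re(t)tⁿ⁺¹ - |t|²tⁿ`, whose coefficients only see `Re t` and `|t|`; since `x̄` has the
same real part and norm as `x`, this yields `conj(x̄ⁿ) = xⁿ`, i.e. `[f, 𝒮(·,x)] = Σ xⁿaₙ = f(x)`.
With alternativity, `y(yⁿz) = yⁿ⁺¹z`, so multiplying `Σ yⁿx̄ⁿ` on the left by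
`1 - 2Re(x)y + |x|²y²` telescopes along the recurrence for `x̄ⁿ` to `1 - yx`. Finally
`x̄(xz) = |x|²z` lets us divide the denominator out, and `|xy| = |x||y|` gives convergence
for `|y||x| < 1`.
-/

theorem sub_smul_add_smul_eq_of_hasSum {R E : Type*} [CommRing R] [AddCommGroup E] [Module R E]
    [TopologicalSpace E] [IsTopologicalAddGroup E] [ContinuousConstSMul R E] [T2Space E]
    {f g h : ℕ → E} {S T U : E} {s p : R}
    (hf : HasSum f S) (hg : HasSum g T) (hh : HasSum h U)
    (hrec : ∀ n, f (n + 2) = s • g (n + 1) - p • h n) :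
    S - s • T + p • U = f 0 + f 1 - s • g 0 := by
  have hf₂ : HasSum (fun n => f (n + 2)) (S - (f 0 + f 1)) := by
    simpa [Finset.sum_range_succ] using (hasSum_nat_add_iff' 2).mpr hf
  have hg₁ : HasSum (fun n => g (n + 1)) (T - g 0) := by
    simpa using (hasSum_nat_add_iff' 1).mpr hg
  have key : S - (f 0 + f 1) = s • (T - g 0) - p • U :=
    hf₂.unique (by simpa only [hrec] using (hg₁.const_smul s).sub (hh.const_smul p))
  linear_combination (norm := module) key

namespace Oct

lemma omul_apply (x y : Oct) (k : Fin 8) :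
    omul x y k = ∑ i, ∑ j, if idxT i j = k then signT i j * x i * y j else 0 := rfl

lemma omul_eq (x y : Oct) : omul x y = !₂[
    x 0 * y 0 - x 1 * y 1 - x 2 * y 2 - x 3 * y 3 - x 4 * y 4 - x 5 * y 5 - x 6 * y 6 - x 7 * y 7,
    x 0 * y 1 + x 1 * y 0 + x 2 * y 4 + x 3 * y 5 - x 4 * y 2 - x 5 * y 3 - x 6 * y 7 + x 7 * y 6,
    x 0 * y 2 - x 1 * y 4 + x 2 * y 0 + x 3 * y 6 + x 4 * y 1 + x 5 * y 7 - x 6 * y 3 - x 7 * y 5,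
    x 0 * y 3 - x 1 * y 5 - x 2 * y 6 + x 3 * y 0 - x 4 * y 7 + x 5 * y 1 + x 6 * y 2 + x 7 * y 4,
    x 0 * y 4 + x 1 * y 2 - x 2 * y 1 + x 3 * y 7 + x 4 * y 0 - x 5 * y 6 + x 6 * y 5 - x 7 * y 3,
    x 0 * y 5 + x 1 * y 3 - x 2 * y 7 - x 3 * y 1 + x 4 * y 6 + x 5 * y 0 - x 6 * y 4 + x 7 * y 2,
    x 0 * y 6 + x 1 * y 7 + x 2 * y 3 - x 3 * y 2 - x 4 * y 5 + x 5 * y 4 + x 6 * y 0 - x 7 * y 1,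
    x 0 * y 7 - x 1 * y 6 + x 2 * y 5 - x 3 * y 4 + x 4 * y 3 - x 5 * y 2 + x 6 * y 1 + x 7 * y 0
    ] := by
  ext k
  fin_cases k <;> simp [omul, Fin.sum_univ_eight, idxT, signT] <;> ring

lemma oone_apply (k : Fin 8) : oone k = if k = 0 then 1 else 0 := by
  simp [oone, unit, PiLp.single_apply]

lemma oconj_apply (x : Oct) (k : Fin 8) : oconj x k = if k = 0 then x k else -x k := rfl

lemma omul_add (x y z : Oct) : omul x (y + z) = omul x y + omul x z := by
  ext k
  simp only [omul_apply, PiLp.add_apply, ← Finset.sum_add_distrib]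
  refine Finset.sum_congr rfl fun i _ => Finset.sum_congr rfl fun j _ => ?_
  split_ifs <;> ring

lemma add_omul (x y z : Oct) : omul (x + y) z = omul x z + omul y z := by
  ext k
  simp only [omul_apply, PiLp.add_apply, ← Finset.sum_add_distrib]
  refine Finset.sum_congr rfl fun i _ => Finset.sum_congr rfl fun j _ => ?_
  split_ifs <;> ring

lemma omul_smul (c : ℝ) (x y : Oct) : omul x (c • y) = c • omul x y := by
  ext k
  simp only [omul_apply, PiLp.smul_apply, smul_eq_mul, Finset.mul_sum]
  refine Finset.sum_congr rfl fun i _ => Finset.sum_congr rfl fun j _ => ?_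
  split_ifs <;> ring

lemma smul_omul (c : ℝ) (x y : Oct) : omul (c • x) y = c • omul x y := by
  ext k
  simp only [omul_apply, PiLp.smul_apply, smul_eq_mul, Finset.mul_sum]
  refine Finset.sum_congr rfl fun i _ => Finset.sum_congr rfl fun j _ => ?_
  split_ifs <;> ring

lemma oone_omul (x : Oct) : omul oone x = x := by
  ext k
  fin_cases k <;> simp [omul_eq, oone_apply]

lemma omul_oone (x : Oct) : omul x oone = x := by
  ext k
  fin_cases k <;> simp [omul_eq, oone_apply]

lemma omul_self (t : Oct) : omul t t = (2 * oRe t) • t - ‖t‖ ^ 2 • oone := by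
  ext k
  fin_cases k <;> simp [omul_eq, oRe, oone_apply, EuclideanSpace.norm_sq_eq, Fin.sum_univ_eight]
    <;> ring

lemma omul_self_omul (t z : Oct) : omul (omul t t) z = omul t (omul t z) := by
  ext k
  fin_cases k <;> simp [omul_eq] <;> ring

lemma norm_omul (a b : Oct) : ‖omul a b‖ = ‖a‖ * ‖b‖ := by
  rw [← sq_eq_sq₀ (norm_nonneg _) (by positivity), mul_pow]
  simp [EuclideanSpace.norm_sq_eq, omul_eq, Fin.sum_univ_eight]
  ring

lemma oconj_eq (x : Oct) : oconj x = (2 * oRe x) • oone - x := by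
  ext k
  by_cases hk : k = 0
  · subst hk
    simp [oconj_apply, oRe, oone_apply]
    ring
  · simp [oconj_apply, oone_apply, hk]

lemma norm_oconj (x : Oct) : ‖oconj x‖ = ‖x‖ := by
  simp [EuclideanSpace.norm_eq, oconj_apply, apply_ite]

lemma oRe_oconj (x : Oct) : oRe (oconj x) = oRe x := rfl

lemma oconj_sub (x y : Oct) : oconj (x - y) = oconj x - oconj y := by
  ext k
  simp only [oconj_apply, PiLp.sub_apply]
  split_ifs <;> ring

lemma oconj_smul (c : ℝ) (x : Oct) : oconj (c • x) = c • oconj x := by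
  ext k
  simp only [oconj_apply, PiLp.smul_apply, smul_eq_mul]
  split_ifs <;> ring

def omulBilin : Oct →ₗ[ℝ] Oct →ₗ[ℝ] Oct :=
  LinearMap.mk₂ ℝ omul add_omul smul_omul omul_add omul_smul

lemma omul_sub (x y z : Oct) : omul x (y - z) = omul x y - omul x z :=
  map_sub (omulBilin x) y z

lemma sub_omul (x y z : Oct) : omul (x - y) z = omul x z - omul y z :=
  LinearMap.map_sub₂ omulBilin x y z

lemma zero_omul (z : Oct) : omul 0 z = 0 :=
  LinearMap.map_zero₂ omulBilin z

lemma hasSum_omul_left {f : ℕ → Oct} {S : Oct} (a : Oct) (h : HasSum f S) :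
    HasSum (fun n => omul a (f n)) (omul a S) :=
  (LinearMap.toContinuousLinearMap (omulBilin a)).hasSum h

lemma oconj_omul_omul (t z : Oct) : omul (oconj t) (omul t z) = ‖t‖ ^ 2 • z := by
  rw [oconj_eq, sub_omul, smul_omul, oone_omul, ← omul_self_omul, omul_self, sub_omul,
    smul_omul, smul_omul, oone_omul, sub_sub_cancel]

lemma oinv_omul_omul {t : Oct} (ht : t ≠ 0) (z : Oct) : omul (oinv t) (omul t z) = z := by
  rw [oinv, smul_omul, oconj_omul_omul, smul_smul,
    inv_mul_cancel₀ (pow_ne_zero 2 (norm_ne_zero_iff.mpr ht)), one_smul]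

lemma norm_oone : ‖oone‖ = 1 := by
  simp [oone, unit]

lemma opow_zero (t : Oct) : opow t 0 = oone := rfl

lemma opow_succ (t : Oct) (n : ℕ) : opow t (n + 1) = omul (opow t n) t := rfl

lemma opow_one (t : Oct) : opow t 1 = t := oone_omul t

lemma norm_opow (t : Oct) (n : ℕ) : ‖opow t n‖ = ‖t‖ ^ n := by
  induction n with
  | zero => rw [opow_zero, norm_oone, pow_zero]
  | succ n ih => rw [opow_succ, norm_omul, ih, pow_succ]

lemma opow_add_two (t : Oct) (n : ℕ) :
    opow t (n + 2) = (2 * oRe t) • opow t (n + 1) - ‖t‖ ^ 2 • opow t n := by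
  induction n with
  | zero => rw [opow_succ, opow_one, omul_self, opow_zero]
  | succ n ih =>
    show omul (opow t (n + 2)) t = (2 * oRe t) • opow t (n + 2) - ‖t‖ ^ 2 • opow t (n + 1)
    conv_lhs => rw [ih, sub_omul, smul_omul, smul_omul]
    rfl

lemma omul_opow_omul (y z : Oct) (n : ℕ) :
    omul y (omul (opow y n) z) = omul (opow y (n + 1)) z := by
  induction n using Nat.twoStepInduction with
  | zero => rw [opow_zero, oone_omul, opow_one]
  | one => rw [opow_one, ← omul_self_omul, opow_succ, opow_one]
  | more n ih₀ ih₁ =>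
    rw [opow_add_two, sub_omul, smul_omul, smul_omul, omul_sub, omul_smul, omul_smul, ih₀, ih₁,
      opow_add_two y (n + 1), sub_omul, smul_omul, smul_omul]

lemma oconj_opow_oconj (x : Oct) (n : ℕ) : oconj (opow (oconj x) n) = opow x n := by
  induction n using Nat.twoStepInduction with
  | zero => ext k; fin_cases k <;> simp [opow_zero, oconj_apply, oone_apply]
  | one => ext k; by_cases hk : k = 0 <;> simp [opow_one, oconj_apply, hk]
  | more n ih₀ ih₁ =>
    rw [opow_add_two, oconj_sub, oconj_smul, oconj_smul, ih₀, ih₁, oRe_oconj, norm_oconj,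
      opow_add_two]

def szegoDenom (y x : Oct) : Oct := oone - (2 * oRe x) • y + ‖x‖ ^ 2 • omul y y

lemma summable_norm_opow_sq {t : Oct} (ht : ‖t‖ < 1) : Summable fun n => ‖opow t n‖ ^ 2 := by
  refine (summable_geometric_of_lt_one (by positivity)
    (pow_lt_one₀ (norm_nonneg t) ht two_ne_zero)).congr fun n => ?_
  rw [norm_opow, ← pow_mul, ← pow_mul, mul_comm]

lemma summable_opow_omul_opow {x y : Oct} (hxy : ‖y‖ * ‖x‖ < 1) (k : ℕ) :
    Summable fun n => omul (opow y (n + k)) (opow x n) := by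
  refine Summable.of_norm (((summable_geometric_of_lt_one (by positivity) hxy).mul_left
    (‖y‖ ^ k)).congr fun n => ?_)
  rw [norm_omul, norm_opow, norm_opow, pow_add, mul_pow]
  ring

lemma szegoDenom_omul_opow_omul (x y z : Oct) (n : ℕ) :
    omul (szegoDenom y x) (omul (opow y n) z) =
      omul (opow y n) z - (2 * oRe x) • omul (opow y (n + 1)) z
        + ‖x‖ ^ 2 • omul (opow y (n + 2)) z := by
  rw [szegoDenom, add_omul, sub_omul, smul_omul, smul_omul, oone_omul, omul_self_omul,
    omul_opow_omul, omul_opow_omul]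

lemma szegoDenom_omul_tsum {x y : Oct} (hxy : ‖y‖ * ‖x‖ < 1) :
    omul (szegoDenom y x) (∑' n, omul (opow y n) (opow (oconj x) n)) = oone - omul y x := by
  set f : ℕ → ℕ → Oct := fun k n => omul (opow y (n + k)) (opow (oconj x) n)
  have hf (k : ℕ) : HasSum (f k) (∑' n, f k n) :=
    (summable_opow_omul_opow (by rwa [norm_oconj]) k).hasSum
  have hrec (n : ℕ) : f 0 (n + 2) = (2 * oRe x) • f 1 (n + 1) - ‖x‖ ^ 2 • f 2 n := by
    simp only [f, opow_add_two (oconj x), omul_sub, omul_smul, oRe_oconj, norm_oconj]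
  have hA : omul (szegoDenom y x) (∑' n, f 0 n) =
      (∑' n, f 0 n) - (2 * oRe x) • (∑' n, f 1 n) + ‖x‖ ^ 2 • (∑' n, f 2 n) :=
    (hasSum_omul_left _ (hf 0)).unique <| by
      simpa only [f, add_zero, szegoDenom_omul_opow_omul] using
        ((hf 0).sub ((hf 1).const_smul _)).add ((hf 2).const_smul _)
  change omul (szegoDenom y x) (∑' n, f 0 n) = _
  rw [hA, sub_smul_add_smul_eq_of_hasSum (hf 0) (hf 1) (hf 2) hrec]
  simp only [f, add_zero, zero_add, opow_zero, opow_one, omul_oone]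
  rw [oconj_eq, omul_sub, omul_smul, omul_oone]
  module

theorem hasSum_sliceSzego {x y : Oct} (hxy : ‖y‖ * ‖x‖ < 1) :
    HasSum (fun n => omul (opow y n) (opow (oconj x) n)) (sliceSzego y x) := by
  have hA := szegoDenom_omul_tsum hxy
  have hA₀ : szegoDenom y x ≠ 0 := by
    intro h
    rw [h, zero_omul, eq_comm, sub_eq_zero] at hA
    have := congrArg norm hA
    rw [norm_oone, norm_omul] at this
    linarith
  rw [sliceSzego, ← szegoDenom, ← hA, oinv_omul_omul hA₀]
  simpa only [add_zero] using
    (summable_opow_omul_opow (x := oconj x) (y := y) (by rwa [norm_oconj]) 0).hasSum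

end Oct

open Oct in
theorem slice_szego_reproduces_sequential_Hardy_general
    (a : ℕ → Oct)
    (f : Oct → Oct)
    (hf : ∀ y ∈ Metric.ball (0 : Oct) 1,
      HasSum (fun n : ℕ => omul (opow y n) (a n)) (f y))
    (x : Oct) (hx : x ∈ Metric.ball (0 : Oct) 1) :
    (Summable fun n : ℕ => ‖opow (oconj x) n‖ ^ 2) ∧
    (∀ y ∈ Metric.ball (0 : Oct) 1,
      HasSum (fun n : ℕ => omul (opow y n) (opow (oconj x) n)) (sliceSzego y x)) ∧
    seqInner a (fun n => opow (oconj x) n) = ∑' n : ℕ, omul (opow x n) (a n) ∧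
    seqInner a (fun n => opow (oconj x) n) = f x := by
  have hx₁ : ‖x‖ < 1 := mem_ball_zero_iff.mp hx
  have hinner : seqInner a (fun n => opow (oconj x) n) = ∑' n : ℕ, omul (opow x n) (a n) :=
    tsum_congr fun n => by rw [oconj_opow_oconj]
  refine ⟨summable_norm_opow_sq (by rwa [norm_oconj]), fun y hy => hasSum_sliceSzego ?_, hinner,
    hinner.trans (hf x hx).tsum_eq⟩
  exact mul_lt_one_of_nonneg_of_lt_one_left (norm_nonneg y) (mem_ball_zero_iff.mp hy) hx₁.le

open Oct in
/-- The slice monogenic Szegő kernel reproduces the sequential Hardy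
space of the unit ball: for `f(y) = Σₙ yⁿaₙ` in `𝐇²(B₈(0,1),𝕆)` and `x ∈ B₈(0,1)`, the
function `𝒮(·,x) = Σₙ yⁿ x̄ⁿ` belongs to `𝐇²(B₈(0,1),𝕆)` and
`[f, 𝒮(·,x)] = Σₙ conj(x̄ⁿ)aₙ = Σₙ xⁿaₙ = f(x)`. -/
theorem slice_szego_reproduces_sequential_Hardy
    (a : ℕ → Oct) (ha : Summable fun n => ‖a n‖ ^ 2)
    (f : Oct → Oct)
    (hf : ∀ y ∈ Metric.ball (0 : Oct) 1,
      HasSum (fun n : ℕ => omul (opow y n) (a n)) (f y))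
    (x : Oct) (hx : x ∈ Metric.ball (0 : Oct) 1) :
    (Summable fun n : ℕ => ‖opow (oconj x) n‖ ^ 2) ∧
    (∀ y ∈ Metric.ball (0 : Oct) 1,
      HasSum (fun n : ℕ => omul (opow y n) (opow (oconj x) n)) (sliceSzego y x)) ∧
    seqInner a (fun n => opow (oconj x) n) = ∑' n : ℕ, omul (opow x n) (a n) ∧
    seqInner a (fun n => opow (oconj x) n) = f x :=
  slice_szego_reproduces_sequential_Hardy_general a f hf x hx
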